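/- arXiv:2001.11419 — 4 statements merged into one kernel-verified Lean document; each statement's English description precedes it below -/
import Mathlib

section
/- For any A ∈ ℝ^{n₁×n₂×n₃}, the block-circulant matrix bcirc(A) is block-diagonalized by the DFT: (F_{n₃} ⊗ I_{n₁}) · bcirc(A) · (F_{n₃}^{-1} ⊗ I_{n₂}) is block-diagonal with n₃ diagonal blocks of size n₁×n₂, the i-th block being the i-th frontal slice of the tensor obtained by applying the DFT along the third mode of A. -/
/-!
The DFT matrix `F` is the Vandermonde matrix of the powers of the primitive `n`-th root of unity
`ω = e^{-2πi/n}`, hence invertible, and each of its rows is a character of `ℤ/n`: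
`F j (m + l) = F j m * F j l`. Reindexing the sum over block columns by `k ↦ m + l` then gives
`(F ⊗ I) bcirc(A) = D (F ⊗ I)`, where `D` is block diagonal with the DFT-transformed slices.
-/

open Matrix BigOperators
noncomputable section

/-- Unfold: stack frontal slices vertically. -/
def unfold {n2 l n3 : ℕ} (B : Fin n3 → Matrix (Fin n2) (Fin l) ℝ) :
    Matrix (Fin n3 × Fin n2) (Fin l) ℝ := Matrix.of fun p c => B p.1 p.2 c

/-- Block-circulant matrix of the frontal slices. -/
def bcirc {n1 n2 n3 : ℕ} (A : Fin n3 → Matrix (Fin n1) (Fin n2) ℝ) :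
    Matrix (Fin n3 × Fin n1) (Fin n3 × Fin n2) ℝ :=
  Matrix.of fun p q => A (p.1 - q.1) p.2 q.2

/-- t-product: fold (bcirc A * unfold B). -/
def tProd {n1 n2 l n3 : ℕ} (A : Fin n3 → Matrix (Fin n1) (Fin n2) ℝ)
    (B : Fin n3 → Matrix (Fin n2) (Fin l) ℝ) : Fin n3 → Matrix (Fin n1) (Fin l) ℝ :=
  fun i => Matrix.of fun a c => (bcirc A * unfold B) (i, a) c

/-- The unnormalized DFT matrix, entries e^{-2πi jk/n}. -/
def dftM (n : ℕ) : Matrix (Fin n) (Fin n) ℂ :=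
  Matrix.of fun j k =>
    Complex.exp (-2 * (Real.pi : ℂ) * Complex.I * (((j : ℕ) : ℂ) * ((k : ℕ) : ℂ)) / (n : ℂ))

/-- DFT along the third mode (applied to each tube). -/
def fourier3 {n1 n2 n3 : ℕ} (A : Fin n3 → Matrix (Fin n1) (Fin n2) ℝ) :
    Fin n3 → Matrix (Fin n1) (Fin n2) ℂ :=
  fun i => Matrix.of fun a b => ∑ k, dftM n3 i k * ((A k a b : ℝ) : ℂ)

/-- Tensor conjugate transpose: transpose each frontal slice and reverse slices 2..n₃. -/
def ctrans {n1 n2 n3 : ℕ} (X : Fin n3 → Matrix (Fin n1) (Fin n2) ℝ) :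
    Fin n3 → Matrix (Fin n2) (Fin n1) ℝ := fun i => (X (-i))ᵀ

/-- Identity tensor: first frontal slice identity, rest zero. -/
def idT (n n3 : ℕ) : Fin n3 → Matrix (Fin n) (Fin n) ℝ :=
  fun i => if (i : ℕ) = 0 then 1 else 0

open Complex

def dftRoot (n : ℕ) : ℂ := exp (-2 * Real.pi * I / n)

lemma isPrimitiveRoot_dftRoot {n : ℕ} (hn : n ≠ 0) : IsPrimitiveRoot (dftRoot n) n := by
  simpa [dftRoot, neg_mul, neg_div, exp_neg] using (isPrimitiveRoot_exp n hn).inv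

lemma dftM_apply (n : ℕ) (j k : Fin n) : dftM n j k = dftRoot n ^ ((j : ℕ) * (k : ℕ)) := by
  rw [dftRoot, ← exp_nat_mul, dftM, of_apply]
  push_cast
  ring_nf

lemma dftM_eq_vandermonde (n : ℕ) :
    dftM n = vandermonde fun j : Fin n => dftRoot n ^ (j : ℕ) := by
  ext j k
  rw [dftM_apply, vandermonde_apply, pow_mul]

lemma isUnit_det_dftM (n : ℕ) : IsUnit (dftM n).det := by
  refine (dftM_eq_vandermonde n ▸ det_vandermonde_ne_zero_iff.mpr ?_).isUnit
  intro j k h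
  exact Fin.ext <| (isPrimitiveRoot_dftRoot j.pos.ne').pow_inj j.isLt k.isLt h

lemma dftM_apply_add {n : ℕ} (j m l : Fin n) : dftM n j (m + l) = dftM n j m * dftM n j l := by
  have hω : dftRoot n ^ n = 1 := (isPrimitiveRoot_dftRoot j.pos.ne').pow_eq_one
  simp only [dftM_apply, pow_mul, Fin.val_add, ← pow_add]
  exact (pow_eq_pow_mod _ (by rw [← pow_mul, mul_comm, pow_mul, hω, one_pow])).symm

open Kronecker in
lemma kronecker_dftM_mul_bcirc {n1 n2 n3 : ℕ} (A : Fin n3 → Matrix (Fin n1) (Fin n2) ℝ) :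
    (dftM n3 ⊗ₖ (1 : Matrix (Fin n1) (Fin n1) ℂ)) * (bcirc A).map ((↑) : ℝ → ℂ) =
      (Matrix.of fun p q => if p.1 = q.1 then fourier3 A p.1 p.2 q.2 else 0 :
          Matrix (Fin n3 × Fin n1) (Fin n3 × Fin n2) ℂ) *
        (dftM n3 ⊗ₖ (1 : Matrix (Fin n2) (Fin n2) ℂ)) := by
  ext ⟨j, a⟩ ⟨l, b⟩
  have : NeZero n3 := .of_pos j.pos
  simp only [mul_apply, Fintype.sum_prod_type, kroneckerMap_apply, map_apply, of_apply,
    one_apply, bcirc, mul_ite, mul_one, mul_zero, ite_mul, zero_mul, Finset.sum_ite_eq,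
    Finset.sum_ite_eq', Finset.mem_univ, if_true, fourier3, Finset.sum_mul]
  rw [← Equiv.sum_comp (Equiv.addRight l) fun k => dftM n3 j k * ((A (k - l) a b : ℝ) : ℂ)]
  refine Finset.sum_congr rfl fun m _ => ?_
  rw [Equiv.coe_addRight, add_sub_cancel_right, dftM_apply_add]
  ring

open Kronecker in
/-- (F ⊗ I) bcirc(A) (F⁻¹ ⊗ I) is block diagonal with blocks the
frontal slices of the mode-3 DFT of A. -/
theorem bcirc_block_diagonalized (n1 n2 n3 : ℕ)
    (A : Fin n3 → Matrix (Fin n1) (Fin n2) ℝ) :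
    (dftM n3 ⊗ₖ (1 : Matrix (Fin n1) (Fin n1) ℂ)) *
        (bcirc A).map ((↑) : ℝ → ℂ) *
        ((dftM n3)⁻¹ ⊗ₖ (1 : Matrix (Fin n2) (Fin n2) ℂ)) =
      Matrix.of fun p q => if p.1 = q.1 then fourier3 A p.1 p.2 q.2 else 0 := by
  rw [kronecker_dftM_mul_bcirc, Matrix.mul_assoc, ← mul_kronecker_mul,
    mul_nonsing_inv _ (isUnit_det_dftM n3), Matrix.one_mul, one_kronecker_one, Matrix.mul_one]
end
end

section
/- The t-product is associative: for tensors A ∈ ℝ^{n₁×n₂×n₃}, B ∈ ℝ^{n₂×n₄×n₃}, C ∈ ℝ^{n₄×n₅×n₃}, we have (A * B) * C = A * (B * C). -/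
open Matrix BigOperators
noncomputable section

theorem unfold_injective {n2 l n3 : ℕ} :
    Function.Injective (unfold : (Fin n3 → Matrix (Fin n2) (Fin l) ℝ) → _) :=
  fun _ _ h => funext fun k => Matrix.ext fun b c => congrFun (congrFun h (k, b)) c

theorem unfold_tProd {n1 n2 l n3 : ℕ} (A : Fin n3 → Matrix (Fin n1) (Fin n2) ℝ)
    (B : Fin n3 → Matrix (Fin n2) (Fin l) ℝ) : unfold (tProd A B) = bcirc A * unfold B :=
  rfl

theorem bcirc_tProd {n1 n2 l n3 : ℕ} (A : Fin n3 → Matrix (Fin n1) (Fin n2) ℝ)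
    (B : Fin n3 → Matrix (Fin n2) (Fin l) ℝ) : bcirc (tProd A B) = bcirc A * bcirc B := by
  ext ⟨i, a⟩ ⟨j, c⟩
  have : NeZero n3 := ⟨i.pos.ne'⟩
  simp only [bcirc, tProd, unfold, mul_apply, of_apply, Fintype.sum_prod_type]
  exact (Fintype.sum_equiv (Equiv.subRight j) _ _ fun k => by
    simp only [Equiv.subRight_apply, sub_sub_sub_cancel_right]).symm

/-- the t-product is associative. -/
theorem tProd_assoc (n1 n2 n3 n4 n5 : ℕ)
    (A : Fin n3 → Matrix (Fin n1) (Fin n2) ℝ)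
    (B : Fin n3 → Matrix (Fin n2) (Fin n4) ℝ)
    (C : Fin n3 → Matrix (Fin n4) (Fin n5) ℝ) :
    tProd (tProd A B) C = tProd A (tProd B C) := by
  apply unfold_injective
  rw [unfold_tProd, unfold_tProd, bcirc_tProd, Matrix.mul_assoc, unfold_tProd]
end
end

section
/- For tensors A ∈ ℝ^{n₁×n₂×n₃} and B ∈ ℝ^{n₂×l×n₃}, (A * B)^* = B^* * A^*, where the tensor conjugate transpose X^* is obtained by transposing each frontal slice of X and reversing the order of frontal slices 2 through n₃. -/
open Matrix BigOperators
noncomputable section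

theorem tProd_apply {n1 n2 l n3 : ℕ} (A : Fin n3 → Matrix (Fin n1) (Fin n2) ℝ)
    (B : Fin n3 → Matrix (Fin n2) (Fin l) ℝ) (i : Fin n3) :
    tProd A B i = ∑ j, A (i - j) * B j := by
  ext a c
  simp only [tProd, bcirc, unfold, mul_apply, of_apply, Fintype.sum_prod_type, Matrix.sum_apply]

/-- (A * B)^* = B^* * A^*. -/
theorem tProd_ctrans (n1 n2 l n3 : ℕ)
    (A : Fin n3 → Matrix (Fin n1) (Fin n2) ℝ)
    (B : Fin n3 → Matrix (Fin n2) (Fin l) ℝ) :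
    ctrans (tProd A B) = tProd (ctrans B) (ctrans A) := by
  funext i
  have : NeZero n3 := ⟨i.pos.ne'⟩
  simp only [ctrans, tProd_apply, transpose_sum, transpose_mul]
  -- substitute `j = k - i` in the left-hand sum
  rw [← (Equiv.subRight i).sum_comp]
  refine Finset.sum_congr rfl fun k _ => ?_
  rw [Equiv.subRight_apply, neg_sub, show -i - (k - i) = -k by abel]
end
end

section
/- Let U ∈ ℂ^{n×r} have orthonormal columns (U'U = I_r), let w ∈ ℂ^r be nonzero, p = Uw, and let ρ ∈ ℂ^n be a nonzero vector orthogonal to the column span of U (U'ρ = 0). For any η ∈ ℝ and σ = ‖ρ‖·‖w‖, define U₊ = U + ( sin(ση)·ρ/‖ρ‖ + (cos(ση) − 1)·p/‖p‖ ) · w'/‖w‖. Then U₊ also has orthonormal columns: U₊' U₊ = I_r. -/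
/-!
Write `x = w/‖w‖` and `u = ρ/‖ρ‖`, so that `p/‖p‖ = U x` and
`U₊ = U + (sin θ · u + (cos θ − 1) · U x) xᴴ` with `θ = ση`. Expanding `U₊ᴴ U₊` with
`Uᴴ U = 1`, `Uᴴ u = 0` and `‖u‖ = ‖x‖ = 1` leaves
`1 + (2 (cos θ − 1) + sin² θ + (cos θ − 1)²) x xᴴ`, and the coefficient vanishes since
`sin² θ + cos² θ = 1`.
-/

open Matrix BigOperators
noncomputable section

def cnorm {n : ℕ} (x : Fin n → ℂ) : ℝ := Real.sqrt (∑ i, Complex.normSq (x i))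

namespace Matrix

variable {R : Type*} [CommRing R] [StarRing R] {m k : Type*} [Fintype m]

theorem star_dotProduct_mulVec [Fintype k] (u : m → R) (U : Matrix m k R) (x : k → R) :
    star u ⬝ᵥ U *ᵥ x = star (Uᴴ *ᵥ u) ⬝ᵥ x := by
  rw [dotProduct_mulVec, star_mulVec, conjTranspose_conjTranspose]

theorem conjTranspose_add_vecMulVec_mul_self (U : Matrix m k R) (v : m → R) (x : k → R) :
    (U + vecMulVec v (star x))ᴴ * (U + vecMulVec v (star x)) =
      Uᴴ * U + vecMulVec (Uᴴ *ᵥ v) (star x) + vecMulVec x (star (Uᴴ *ᵥ v)) +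
        (star v ⬝ᵥ v) • vecMulVec x (star x) := by
  rw [conjTranspose_add, conjTranspose_vecMulVec, star_star, Matrix.add_mul, Matrix.mul_add,
    Matrix.mul_add, mul_vecMulVec, vecMulVec_mul, vecMulVec_mul_vecMulVec, vecMulVec_smul,
    star_mulVec, conjTranspose_conjTranspose]
  abel

end Matrix

section Geodesic

variable {𝕜 : Type*} [RCLike 𝕜] {m k : Type*}

def grassmannGeodesic [Fintype k] (U : Matrix m k 𝕜) (u : m → 𝕜) (x : k → 𝕜) (θ : ℝ) :
    Matrix m k 𝕜 :=
  U + vecMulVec ((Real.sin θ : 𝕜) • u + ((Real.cos θ : 𝕜) - 1) • U *ᵥ x) (star x)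

theorem conjTranspose_mul_self_grassmannGeodesic [Fintype m] [Fintype k] [DecidableEq k]
    {U : Matrix m k 𝕜} (hU : Uᴴ * U = 1) {u : m → 𝕜} (hu : star u ⬝ᵥ u = 1)
    (huU : Uᴴ *ᵥ u = 0) {x : k → 𝕜} (hx : star x ⬝ᵥ x = 1)
    (θ : ℝ) : (grassmannGeodesic U u x θ)ᴴ * grassmannGeodesic U u x θ = 1 := by
  set s : 𝕜 := ((Real.sin θ : ℝ) : 𝕜)
  set c : 𝕜 := ((Real.cos θ : ℝ) : 𝕜)
  set v := s • u + (c - 1) • U *ᵥ x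
  have hs : star s = s := RCLike.conj_ofReal _
  have hc : star c = c := RCLike.conj_ofReal _
  have hsc : s ^ 2 + c ^ 2 = 1 := by simp only [s, c]; exact_mod_cast Real.sin_sq_add_cos_sq θ
  have hUv : Uᴴ *ᵥ v = (c - 1) • x := by
    rw [mulVec_add, mulVec_smul, mulVec_smul, huU, mulVec_mulVec, hU, one_mulVec, smul_zero,
      zero_add]
  have hUxu : star (U *ᵥ x) ⬝ᵥ u = 0 := by
    rw [star_dotProduct, star_dotProduct_mulVec, huU, star_zero, zero_dotProduct, star_zero]
  have hUxUx : star (U *ᵥ x) ⬝ᵥ U *ᵥ x = 1 := by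
    rw [star_dotProduct_mulVec, mulVec_mulVec, hU, one_mulVec, hx]
  have hvv : star v ⬝ᵥ v = s ^ 2 + (c - 1) ^ 2 := by
    have huUx : star u ⬝ᵥ U *ᵥ x = 0 := by
      rw [star_dotProduct, hUxu, star_zero]
    simp only [v, star_add, star_smul, add_dotProduct, dotProduct_add, smul_dotProduct,
      dotProduct_smul, hu, hUxu, huUx, hUxUx, star_sub, star_one, hs, hc, smul_eq_mul]
    ring
  rw [grassmannGeodesic, conjTranspose_add_vecMulVec_mul_self, hU, hUv, star_smul, star_sub,
    star_one, hc, hvv, smul_vecMulVec, vecMulVec_smul, add_assoc, add_assoc, ← add_smul,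
    ← add_smul]
  convert add_zero (1 : Matrix k k 𝕜)
  convert zero_smul 𝕜 (vecMulVec x (star x))
  linear_combination hsc

end Geodesic

theorem ofReal_cnorm_sq {n : ℕ} (x : Fin n → ℂ) : ((cnorm x ^ 2 : ℝ) : ℂ) = star x ⬝ᵥ x := by
  rw [cnorm, Real.sq_sqrt (Finset.sum_nonneg fun i _ => Complex.normSq_nonneg _)]
  push_cast
  simp [dotProduct, Complex.normSq_eq_conj_mul_self]

theorem cnorm_pos {n : ℕ} {x : Fin n → ℂ} (hx : x ≠ 0) : 0 < cnorm x := by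
  obtain ⟨i, hi⟩ := Function.ne_iff.mp hx
  exact Real.sqrt_pos.mpr <| Finset.sum_pos' (fun j _ => Complex.normSq_nonneg _)
    ⟨i, Finset.mem_univ i, Complex.normSq_pos.mpr hi⟩

theorem cnorm_mulVec {n r : ℕ} {U : Matrix (Fin n) (Fin r) ℂ} (hU : Uᴴ * U = 1)
    (w : Fin r → ℂ) : cnorm (U *ᵥ w) = cnorm w := by
  have hsq : cnorm (U *ᵥ w) ^ 2 = cnorm w ^ 2 := by
    apply Complex.ofReal_injective
    rw [ofReal_cnorm_sq, ofReal_cnorm_sq, star_dotProduct_mulVec, mulVec_mulVec, hU, one_mulVec]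
  exact (pow_left_inj₀ (Real.sqrt_nonneg _) (Real.sqrt_nonneg _) two_ne_zero).mp hsq

theorem star_dotProduct_self_normalize {n : ℕ} {x : Fin n → ℂ} (hx : x ≠ 0) :
    star ((cnorm x : ℂ)⁻¹ • x) ⬝ᵥ ((cnorm x : ℂ)⁻¹ • x) = 1 := by
  have hne : (cnorm x : ℂ) ≠ 0 := Complex.ofReal_ne_zero.mpr (cnorm_pos hx).ne'
  rw [star_smul, smul_dotProduct, dotProduct_smul, ← ofReal_cnorm_sq, RCLike.star_def, map_inv₀,
    Complex.conj_ofReal, smul_eq_mul, smul_eq_mul]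
  push_cast
  field_simp

theorem geodesic_update_orthonormal_general (n r : ℕ)
    (U : Matrix (Fin n) (Fin r) ℂ) (hU : Uᴴ * U = 1)
    (w : Fin r → ℂ) (hw : w ≠ 0)
    (ρ : Fin n → ℂ) (hρ : ρ ≠ 0) (hρU : Uᴴ.mulVec ρ = 0)
    (η : ℝ)
    (p : Fin n → ℂ) (hp : p = U.mulVec w)
    (σ : ℝ)
    (Up : Matrix (Fin n) (Fin r) ℂ)
    (hUp : Up = Matrix.of fun i j => U i j +
      (((Real.sin (σ * η) : ℝ) : ℂ) * (ρ i / ((cnorm ρ : ℝ) : ℂ)) +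
        (((Real.cos (σ * η) - 1 : ℝ)) : ℂ) * (p i / ((cnorm p : ℝ) : ℂ))) *
        (starRingEnd ℂ (w j) / ((cnorm w : ℝ) : ℂ))) :
    Upᴴ * Up = 1 := by
  have hUp' : Up = grassmannGeodesic U ((cnorm ρ : ℂ)⁻¹ • ρ) ((cnorm w : ℂ)⁻¹ • w) (σ * η) := by
    rw [hUp, hp, cnorm_mulVec hU]
    ext i j
    simp only [grassmannGeodesic, of_apply, Matrix.add_apply, Matrix.smul_apply, vecMulVec_apply,
      mulVec_smul, star_smul, star_inv₀, RCLike.star_def, Complex.conj_ofReal, vecMulVec_smul,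
      Pi.add_apply, Pi.smul_apply, Pi.star_apply, smul_eq_mul, Complex.ofReal_sub,
      Complex.ofReal_one, Complex.coe_algebraMap, div_eq_inv_mul, add_right_inj]
    ring
  have huU : Uᴴ *ᵥ ((cnorm ρ : ℂ)⁻¹ • ρ) = 0 := by rw [mulVec_smul, hρU, smul_zero]
  rw [hUp']
  exact conjTranspose_mul_self_grassmannGeodesic hU (star_dotProduct_self_normalize hρ) huU
    (star_dotProduct_self_normalize hw) _

/-- the Grassmannian geodesic update preserves orthonormality of columns. -/
theorem geodesic_update_orthonormal (n r : ℕ)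
    (U : Matrix (Fin n) (Fin r) ℂ) (hU : Uᴴ * U = 1)
    (w : Fin r → ℂ) (hw : w ≠ 0)
    (ρ : Fin n → ℂ) (hρ : ρ ≠ 0) (hρU : Uᴴ.mulVec ρ = 0)
    (η : ℝ)
    (p : Fin n → ℂ) (hp : p = U.mulVec w)
    (σ : ℝ) (hσ : σ = cnorm ρ * cnorm w)
    (Up : Matrix (Fin n) (Fin r) ℂ)
    (hUp : Up = Matrix.of fun i j => U i j +
      (((Real.sin (σ * η) : ℝ) : ℂ) * (ρ i / ((cnorm ρ : ℝ) : ℂ)) +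
        (((Real.cos (σ * η) - 1 : ℝ)) : ℂ) * (p i / ((cnorm p : ℝ) : ℂ))) *
        (starRingEnd ℂ (w j) / ((cnorm w : ℝ) : ℂ))) :
    Upᴴ * Up = 1 :=
  geodesic_update_orthonormal_general n r U hU w hw ρ hρ hρU η p hp σ Up hUp
end
end
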